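/- Let 0 < r₁ < 1, r₂ = √(1−r₁²), f₁(t) = r₁ sin(t/r₁), f₂(t) = r₁ cos(t/r₁), θ(t) = −t/r₁. Then g := f₂ cos θ − f₁ sin θ = r₁ identically, h := √(1−g²) = r₂, and f₃ := √(1−f₁²−f₂²) = r₂; moreover if these functions satisfy θ' = (h²/(f₃² f₂))(ℓ cos θ − n f₂ g + n H f₂ h) for all t with f₂(t) > 0, then |H| = |ℓ+1 − n r₁²|/(n r₁ r₂). -/

import Mathlib

/-!
The profile `(f₁, f₂)` runs along the circle of radius `r₁` while `θ` rotates backwards at the same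
speed, so `g = r₁ cos (t/r₁ + θ)` and `f₁² + f₂²` are constant. The equation for `θ'` then has
constant coefficients, and at `t = 0` it is a linear equation for `H`.
-/

open Real

theorem mul_cos_mul_cos_neg_sub_mul_sin_mul_sin_neg (r x : ℝ) :
    r * cos x * cos (-x) - r * sin x * sin (-x) = r := by
  rw [mul_assoc, mul_assoc, ← mul_sub, ← cos_add, add_neg_cancel, cos_zero, mul_one]

theorem mul_sin_sq_add_mul_cos_sq (r x : ℝ) : (r * sin x) ^ 2 + (r * cos x) ^ 2 = r ^ 2 := by
  linear_combination r ^ 2 * sin_sq_add_cos_sq x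

/-- The profile equation at `t = 0`, where `(f₁, f₂) = (0, r)` and `θ = 0`. -/
theorem abs_eq_of_neg_inv_eq {ℓ n H r : ℝ} (hn : 0 < n) (hr₀ : 0 < r) (hr₁ : r < 1)
    (h : -(1 / r) = (1 - r ^ 2) / ((1 - r ^ 2) * r) *
      (ℓ - n * r * r + n * H * r * √(1 - r ^ 2))) :
    |H| = |ℓ + 1 - n * r ^ 2| / (n * r * √(1 - r ^ 2)) := by
  have hr2 : 0 < 1 - r ^ 2 := by nlinarith
  have hs : 0 < √(1 - r ^ 2) := sqrt_pos.mpr hr2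
  rw [div_mul_cancel_left₀ hr2.ne', ← div_eq_inv_mul, ← neg_div, div_left_inj' hr₀.ne'] at h
  have hH : H = -(ℓ + 1 - n * r ^ 2) / (n * r * √(1 - r ^ 2)) := by
    field_simp
    linear_combination -h
  rw [hH, abs_div, abs_neg, abs_of_pos (by positivity : 0 < n * r * √(1 - r ^ 2))]

theorem stmt_8_general (ℓ m : ℕ) (H r₁ : ℝ)
    (h0 : 0 < r₁) (h1 : r₁ < 1)
    (f₁ f₂ θ : ℝ → ℝ)
    (hf₁ : ∀ t, f₁ t = r₁ * Real.sin (t / r₁))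
    (hf₂ : ∀ t, f₂ t = r₁ * Real.cos (t / r₁))
    (hθ : ∀ t, θ t = -(t / r₁)) :
    (∀ t, f₂ t * Real.cos (θ t) - f₁ t * Real.sin (θ t) = r₁) ∧
    (∀ t, Real.sqrt (1 - (f₂ t * Real.cos (θ t) - f₁ t * Real.sin (θ t))^2)
        = Real.sqrt (1 - r₁^2)) ∧
    (∀ t, Real.sqrt (1 - (f₁ t)^2 - (f₂ t)^2) = Real.sqrt (1 - r₁^2)) ∧
    ((∀ t, f₂ t > 0 →
      deriv θ t =
        (1 - (f₂ t * Real.cos (θ t) - f₁ t * Real.sin (θ t))^2) /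
          ((1 - (f₁ t)^2 - (f₂ t)^2) * f₂ t) *
        ((ℓ : ℝ) * Real.cos (θ t)
          - (ℓ + m + 1 : ℝ) * f₂ t * (f₂ t * Real.cos (θ t) - f₁ t * Real.sin (θ t))
          + (ℓ + m + 1 : ℝ) * H * f₂ t *
              Real.sqrt (1 - (f₂ t * Real.cos (θ t) - f₁ t * Real.sin (θ t))^2))) →
      |H| = |(ℓ : ℝ) + 1 - (ℓ + m + 1 : ℝ) * r₁^2| /
        ((ℓ + m + 1 : ℝ) * r₁ * Real.sqrt (1 - r₁^2))) := by
  have hg : ∀ t, f₂ t * cos (θ t) - f₁ t * sin (θ t) = r₁ := fun t => by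
    rw [hf₁, hf₂, hθ, mul_cos_mul_cos_neg_sub_mul_sin_mul_sin_neg]
  have hnorm : ∀ t, f₁ t ^ 2 + f₂ t ^ 2 = r₁ ^ 2 := fun t => by
    rw [hf₁, hf₂, mul_sin_sq_add_mul_cos_sq]
  refine ⟨hg, fun t => by rw [hg], fun t => by rw [sub_sub, hnorm], fun hode => ?_⟩
  have hderiv : deriv θ 0 = -(1 / r₁) := by
    rw [funext hθ]
    exact ((hasDerivAt_id' 0).div_const r₁).neg.deriv
  have h := hode 0 (by simpa [hf₂] using h0)
  rw [hderiv, hg, sub_sub, hnorm, hθ, hf₂] at h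
  simp only [zero_div, neg_zero, cos_zero, mul_one] at h
  exact abs_eq_of_neg_inv_eq (by positivity) h0 h1 h

theorem stmt_8 (ℓ m : ℕ) (hℓ : 0 < ℓ) (hm : 0 < m) (H r₁ : ℝ)
    (h0 : 0 < r₁) (h1 : r₁ < 1)
    (f₁ f₂ θ : ℝ → ℝ)
    (hf₁ : ∀ t, f₁ t = r₁ * Real.sin (t / r₁))
    (hf₂ : ∀ t, f₂ t = r₁ * Real.cos (t / r₁))
    (hθ : ∀ t, θ t = -(t / r₁)) :
    (∀ t, f₂ t * Real.cos (θ t) - f₁ t * Real.sin (θ t) = r₁) ∧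
    (∀ t, Real.sqrt (1 - (f₂ t * Real.cos (θ t) - f₁ t * Real.sin (θ t))^2)
        = Real.sqrt (1 - r₁^2)) ∧
    (∀ t, Real.sqrt (1 - (f₁ t)^2 - (f₂ t)^2) = Real.sqrt (1 - r₁^2)) ∧
    ((∀ t, f₂ t > 0 →
      deriv θ t =
        (1 - (f₂ t * Real.cos (θ t) - f₁ t * Real.sin (θ t))^2) /
          ((1 - (f₁ t)^2 - (f₂ t)^2) * f₂ t) *
        ((ℓ : ℝ) * Real.cos (θ t)
          - (ℓ + m + 1 : ℝ) * f₂ t * (f₂ t * Real.cos (θ t) - f₁ t * Real.sin (θ t))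
          + (ℓ + m + 1 : ℝ) * H * f₂ t *
              Real.sqrt (1 - (f₂ t * Real.cos (θ t) - f₁ t * Real.sin (θ t))^2))) →
      |H| = |(ℓ : ℝ) + 1 - (ℓ + m + 1 : ℝ) * r₁^2| /
        ((ℓ + m + 1 : ℝ) * r₁ * Real.sqrt (1 - r₁^2))) :=
  stmt_8_general ℓ m H r₁ h0 h1 f₁ f₂ θ hf₁ hf₂ hθ
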